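/- Let (Ω, F, (F_t), P) be a filtered probability space carrying a standard Brownian motion W with natural (augmented) filtration, H a separable Hilbert space, and p ∈ [1,∞). Then the image under the map u ↦ ∫₀ᵀ u(t) dt of the space L^p_F(Ω; L¹(0,T;H)) of progressively measurable processes is dense in L^p_{F_T}(Ω; H). -/

import Mathlib

open MeasureTheory ProbabilityTheory
open scoped ENNReal NNReal

/-- A standard one-dimensional Brownian motion `W` on `(Ω, μ)` whose filtration `F`
is the natural filtration of `W` augmented by the `μ`-null sets. -/
def IsStdBM {Ω : Type*} {mΩ : MeasurableSpace Ω} (μ : Measure Ω)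
    (F : Filtration ℝ mΩ) (W : ℝ → Ω → ℝ) : Prop :=
  (∀ t, Measurable (W t)) ∧
  (∀ ω, W 0 ω = 0) ∧
  (∀ ω, Continuous fun t => W t ω) ∧
  (∀ s t : ℝ, 0 ≤ s → s ≤ t →
    μ.map (fun ω => W t ω - W s ω) = gaussianReal 0 (Real.toNNReal (t - s))) ∧
  (∀ s t : ℝ, 0 ≤ s → s ≤ t →
    Indep (MeasurableSpace.comap (fun ω => W t ω - W s ω) inferInstance) (F s) μ) ∧
  (∀ t : ℝ, (F t : MeasurableSpace Ω) =
    (⨆ r ∈ Set.Icc (0:ℝ) t, MeasurableSpace.comap (W r) inferInstance) ⊔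
      MeasurableSpace.generateFrom {A : Set Ω | MeasurableSet[mΩ] A ∧ μ A = 0})

/-!
Because the paths of `W` are continuous, `F T` is generated by the σ-algebras `F tₙ` along any
sequence `tₙ ↑ T`. Sets of `F T` are then approximated in measure by sets of some `F tₙ`, so
`⋃ₙ Lᵖ(F tₙ)` is dense in `Lᵖ(F T)`. Finally, an `F tₙ`-measurable `η` is the time integral
of the progressive process `η / (T - tₙ) · 1_{(tₙ, T]}`.
-/

open Filter Set
open scoped Topology

namespace MeasureTheory

variable {Ω E : Type*} {mΩ : MeasurableSpace Ω} {μ : Measure Ω} [NormedAddCommGroup E]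

lemma isSetRing_iUnion_measurableSet {ι : Type*} [Nonempty ι] {m : ι → MeasurableSpace Ω}
    (hm : Directed (· ≤ ·) m) : IsSetRing (⋃ i, {s | MeasurableSet[m i] s}) := by
  have common {s t : Set Ω} (hs : s ∈ ⋃ i, {s | MeasurableSet[m i] s})
      (ht : t ∈ ⋃ i, {s | MeasurableSet[m i] s}) :
      ∃ k, MeasurableSet[m k] s ∧ MeasurableSet[m k] t := by
    obtain ⟨i, hs⟩ := mem_iUnion.1 hs
    obtain ⟨j, ht⟩ := mem_iUnion.1 ht
    obtain ⟨k, hik, hjk⟩ := hm i j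
    exact ⟨k, hik s hs, hjk t ht⟩
  refine ⟨mem_iUnion.2 ⟨Classical.arbitrary ι, (m _).measurableSet_empty⟩,
    fun s t hs ht => ?_, fun s t hs ht => ?_⟩
  · obtain ⟨k, hs, ht⟩ := common hs ht
    exact mem_iUnion.2 ⟨k, hs.union ht⟩
  · obtain ⟨k, hs, ht⟩ := common hs ht
    exact mem_iUnion.2 ⟨k, hs.diff ht⟩

theorem exists_stronglyMeasurable_eLpNorm_sub_le_of_iSup {ι : Type*} [Nonempty ι]
    {m : ι → MeasurableSpace Ω} (hm : Directed (· ≤ ·) m) (hle : ∀ i, m i ≤ mΩ)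
    [IsFiniteMeasure μ] {q : ℝ≥0∞} (hq : q ≠ ∞) {ξ : Ω → E}
    (hξm : StronglyMeasurable[⨆ i, m i] ξ) (hξ : MemLp ξ q μ) {ε : ℝ≥0∞} (hε : ε ≠ 0) :
    ∃ i, ∃ η : Ω → E, StronglyMeasurable[m i] η ∧ eLpNorm (ξ - η) q μ ≤ ε := by
  have hsup : ⨆ i, m i ≤ mΩ := iSup_le hle
  set ν := μ.trim hsup
  have hξν : MemLp ξ q ν :=
    ⟨hξm.aestronglyMeasurable, by rw [eLpNorm_trim hsup hξm]; exact hξ.2⟩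
  have h_indicator (c : E) {s : Set Ω} (hs : MeasurableSet[⨆ i, m i] s) {ε : ℝ≥0∞}
      (hε : ε ≠ 0) :
      ∃ i, ∃ η : Ω → E, StronglyMeasurable[m i] η ∧
        eLpNorm (η - s.indicator fun _ => c) q ν ≤ ε := by
    obtain ⟨δ, hδ, hsmall⟩ := exists_eLpNorm_indicator_le (μ := ν) hq c hε
    have huniv : univ ∈ ⋃ i, {s | MeasurableSet[m i] s} :=
      mem_iUnion.2 ⟨Classical.arbitrary ι, @MeasurableSet.univ _ (m _)⟩
    obtain ⟨t, ht, hts⟩ :=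
      @exists_measure_symmDiff_lt_of_generateFrom_isSetRing Ω (⨆ i, m i) ν _ _
        (isSetRing_iUnion_measurableSet hm)
        ⟨{univ}, countable_singleton _, singleton_subset_iff.2 huniv, by simp⟩
        (MeasurableSpace.generateFrom_iUnion_measurableSet m).symm _ hs _ (ENNReal.coe_pos.2 hδ)
    obtain ⟨i, ht⟩ := mem_iUnion.1 ht
    refine ⟨i, t.indicator fun _ => c, stronglyMeasurable_const.indicator ht, ?_⟩
    rw [eLpNorm_indicator_sub_indicator]
    exact hsmall _ hts.le
  obtain ⟨η, hη, i, hηm⟩ := @MemLp.induction_dense Ω E (⨆ i, m i) _ q ν hq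
    (fun g => ∃ i, StronglyMeasurable[m i] g)
    (fun c s hs _ ε hε => by
      obtain ⟨i, η, hη, hηs⟩ := h_indicator c hs hε
      exact ⟨η, hηs, i, hη⟩)
    (fun f g ⟨i, hf⟩ ⟨j, hg⟩ => by
      obtain ⟨k, hik, hjk⟩ := hm i j
      exact ⟨k, (hf.mono hik).add (hg.mono hjk)⟩)
    (fun f ⟨i, hf⟩ => (hf.mono (le_iSup m i)).aestronglyMeasurable) ξ hξν ε hε
  refine ⟨i, η, hηm, ?_⟩
  rwa [eLpNorm_trim hsup (hξm.sub (hηm.mono (le_iSup m i)))] at hη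

section spreadOnIoc

variable [NormedSpace ℝ E]

noncomputable def spreadOnIoc (s T : ℝ) (η : Ω → E) : ℝ → Ω → E :=
  fun t ω => (Ioc s T).indicator (fun _ => (T - s)⁻¹ • η ω) t

lemma isStronglyProgressive_spreadOnIoc {F : Filtration ℝ mΩ} {s T : ℝ} {η : Ω → E}
    (hη : StronglyMeasurable[F s] η) : IsStronglyProgressive F (spreadOnIoc s T η) := by
  intro r
  rcases le_or_gt r s with hrs | hsr
  · have : (fun p : Iic r × Ω => spreadOnIoc s T η p.1 p.2) = fun _ => 0 := by
      ext p
      exact indicator_of_notMem (fun h => (h.1.trans_le (p.1.2.trans hrs)).false) _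
    exact this ▸ stronglyMeasurable_const
  · have : (fun p : Iic r × Ω => spreadOnIoc s T η p.1 p.2) =
        fun p => (Ioc s T).indicator (fun _ => (T - s)⁻¹) (p.1 : ℝ) • η p.2 := by
      ext p
      by_cases h : (p.1 : ℝ) ∈ Ioc s T <;> simp [spreadOnIoc, h]
    rw [this]
    exact ((measurable_const.indicator measurableSet_Ioc).comp
      (measurable_subtype_coe.comp measurable_fst)).stronglyMeasurable.smul
      ((hη.mono (F.mono hsr.le)).comp_measurable measurable_snd)

lemma setIntegral_spreadOnIoc [CompleteSpace E] {s T : ℝ} (hs : 0 ≤ s) (hsT : s < T)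
    (η : Ω → E) (ω : Ω) :
    ∫ t in Ioc 0 T, spreadOnIoc s T η t ω = η ω := by
  unfold spreadOnIoc
  rw [setIntegral_indicator measurableSet_Ioc,
    inter_eq_self_of_subset_right (Ioc_subset_Ioc_left hs), setIntegral_const, measureReal_def,
    Real.volume_Ioc, ENNReal.toReal_ofReal (sub_nonneg.2 hsT.le), smul_smul,
    mul_inv_cancel₀ (sub_ne_zero.2 hsT.ne'), one_smul]

lemma setLIntegral_enorm_spreadOnIoc {s T : ℝ} (hs : 0 ≤ s) (hsT : s < T) (η : Ω → E)
    (ω : Ω) : ∫⁻ t in Ioc 0 T, ‖spreadOnIoc s T η t ω‖ₑ = ‖η ω‖ₑ := by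
  simp_rw [spreadOnIoc, enorm_indicator_eq_indicator_enorm]
  rw [lintegral_indicator measurableSet_Ioc, Measure.restrict_restrict measurableSet_Ioc,
    inter_eq_self_of_subset_left (Ioc_subset_Ioc_left hs), setLIntegral_const, Real.volume_Ioc,
    enorm_smul, mul_right_comm, ← ofReal_norm, ← ENNReal.ofReal_mul (norm_nonneg _),
    Real.norm_of_nonneg (inv_nonneg.2 (sub_nonneg.2 hsT.le)),
    inv_mul_cancel₀ (sub_ne_zero.2 hsT.ne'), ENNReal.ofReal_one, one_mul]

end spreadOnIoc

end MeasureTheory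

namespace IsStdBM

variable {Ω : Type*} {mΩ : MeasurableSpace Ω} {μ : Measure Ω} {F : Filtration ℝ mΩ}
  {W : ℝ → Ω → ℝ}

lemma measurable_filtration (hW : IsStdBM μ F W) {r t : ℝ} (hr : 0 ≤ r) (hrt : r ≤ t) :
    Measurable[F t] (W r) := by
  rw [measurable_iff_comap_le, hW.2.2.2.2.2 t]
  exact le_sup_of_le_left <| le_iSup₂_of_le (f := fun r _ => MeasurableSpace.comap (W r) _) r
    ⟨hr, hrt⟩ le_rfl

lemma iSup_filtration_eq_of_tendsto (hW : IsStdBM μ F W) {T : ℝ} {t : ℕ → ℝ}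
    (ht : ∀ n, t n ∈ Icc 0 T) (hlim : Tendsto t atTop (𝓝 T)) :
    ⨆ n, (F (t n) : MeasurableSpace Ω) = F T := by
  refine le_antisymm (iSup_le fun n => F.mono (ht n).2) ?_
  have hF := hW.2.2.2.2.2
  rw [hF T]
  refine sup_le (iSup₂_le fun r hr => measurable_iff_comap_le.1 ?_) ?_
  · -- `W r` is the pointwise limit of `W (min r (t n))` by path continuity
    refine @measurable_of_tendsto_metrizable' _ _ (⨆ n, (F (t n) : MeasurableSpace Ω)) _ _ _ _ _
      (fun n => W (min r (t n))) _ atTop _ _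
      (fun n => (hW.measurable_filtration (le_min hr.1 (ht n).1) (min_le_right _ _)).mono
        (le_iSup (fun n => (F (t n) : MeasurableSpace Ω)) n) le_rfl)
      (tendsto_pi_nhds.2 fun ω => ?_)
    have : Tendsto (fun n => min r (t n)) atTop (𝓝 r) := by
      simpa [min_eq_left hr.2] using (tendsto_const_nhds (x := r)).min hlim
    exact ((hW.2.2.1 ω).tendsto r).comp this
  · exact le_iSup_of_le 0 (hF (t 0) ▸ le_sup_right)

end IsStdBM

theorem stmt2_general {Ω H : Type*} {mΩ : MeasurableSpace Ω}
    [NormedAddCommGroup H] [InnerProductSpace ℝ H] [CompleteSpace H]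
    (μ : Measure Ω) [IsProbabilityMeasure μ]
    (F : Filtration ℝ mΩ) (W : ℝ → Ω → ℝ) (hW : IsStdBM μ F W)
    (T : ℝ) (hT : 0 < T) (p : ℝ) (hp : 1 ≤ p)
    (ξ : Ω → H) (hξm : StronglyMeasurable[F T] ξ) (hξp : MemLp ξ (ENNReal.ofReal p) μ) :
    ∀ ε > 0, ∃ u : ℝ → Ω → H, ProgMeasurable F u ∧
      (∫⁻ ω, (∫⁻ t in Set.Ioc (0:ℝ) T, (‖u t ω‖₊ : ℝ≥0∞)) ^ p ∂μ) ≠ ⊤ ∧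
      (∫ ω, ‖(∫ t in Set.Ioc (0:ℝ) T, u t ω) - ξ ω‖ ^ p ∂μ) ^ (1 / p) < ε := by
  intro ε hε
  have hq : ENNReal.ofReal p ≠ 0 := by rw [Ne, ENNReal.ofReal_eq_zero]; linarith
  have hpq : (ENNReal.ofReal p).toReal = p := ENNReal.toReal_ofReal (by linarith)
  obtain ⟨t, ht_mono, ht_mem, ht_lim⟩ := exists_seq_strictMono_tendsto' hT
  have hsup : ⨆ n, (F (t n) : MeasurableSpace Ω) = F T :=
    hW.iSup_filtration_eq_of_tendsto (fun n => Ioo_subset_Icc_self (ht_mem n)) ht_lim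
  obtain ⟨n, η, hηm, hη⟩ := exists_stronglyMeasurable_eLpNorm_sub_le_of_iSup
    (Monotone.directed_le fun i j hij => F.mono (ht_mono.monotone hij)) (fun n => F.le _)
    ENNReal.ofReal_ne_top (hsup ▸ hξm) hξp (ENNReal.ofReal_pos.2 (half_pos hε)).ne'
  have hηLp : MemLp η (ENNReal.ofReal p) μ := by
    have : MemLp (ξ - η) (ENNReal.ofReal p) μ :=
      ⟨hξp.1.sub (hηm.mono (F.le _)).aestronglyMeasurable, hη.trans_lt ENNReal.ofReal_lt_top⟩
    simpa using hξp.sub this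
  refine ⟨spreadOnIoc (t n) T η, isStronglyProgressive_spreadOnIoc hηm, ?_, ?_⟩
  · simp_rw [← enorm_eq_nnnorm, setLIntegral_enorm_spreadOnIoc (ht_mem n).1.le (ht_mem n).2]
    rw [← hpq]
    exact (lintegral_rpow_enorm_lt_top_of_eLpNorm_lt_top hq ENNReal.ofReal_ne_top hηLp.2).ne
  · simp_rw [setIntegral_spreadOnIoc (ht_mem n).1.le (ht_mem n).2]
    rw [eLpNorm_sub_comm, (hηLp.sub hξp).eLpNorm_eq_integral_rpow_norm hq ENNReal.ofReal_ne_top,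
      hpq, ENNReal.ofReal_le_ofReal_iff (half_pos hε).le] at hη
    rw [one_div]
    exact hη.trans_lt (half_lt_self hε)

/-- Proposition 1.1: the image of `L^p_F(Ω; L¹(0,T;H))` under the Bochner integration map
`u ↦ ∫₀ᵀ u(t) dt` is dense in `L^p_{F_T}(Ω;H)`. -/
theorem stmt2 {Ω H : Type*} {mΩ : MeasurableSpace Ω}
    [NormedAddCommGroup H] [InnerProductSpace ℝ H] [CompleteSpace H]
    [SecondCountableTopology H]
    (μ : Measure Ω) [IsProbabilityMeasure μ]
    (F : Filtration ℝ mΩ) (W : ℝ → Ω → ℝ) (hW : IsStdBM μ F W)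
    (T : ℝ) (hT : 0 < T) (p : ℝ) (hp : 1 ≤ p)
    (ξ : Ω → H) (hξm : StronglyMeasurable[F T] ξ) (hξp : MemLp ξ (ENNReal.ofReal p) μ) :
    ∀ ε > 0, ∃ u : ℝ → Ω → H, ProgMeasurable F u ∧
      (∫⁻ ω, (∫⁻ t in Set.Ioc (0:ℝ) T, (‖u t ω‖₊ : ℝ≥0∞)) ^ p ∂μ) ≠ ⊤ ∧
      (∫ ω, ‖(∫ t in Set.Ioc (0:ℝ) T, u t ω) - ξ ω‖ ^ p ∂μ) ^ (1 / p) < ε :=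
  stmt2_general μ F W hW T hT p hp ξ hξm hξp
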